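/- Let Δ ⊂ ℝ³ be the root system of D(2,1;α), namely Δ := {±γ₁, ±γ₂, ±γ₃} ∪ {(s₁γ₁ + s₂γ₂ + s₃γ₃)/2 : s₁, s₂, s₃ ∈ {1, −1}}, where γ₁, γ₂, γ₃ is the standard basis of ℝ³. Set P₀ := {±γ₃} ∪ {(s(γ₁ − γ₂) + tγ₃)/2 : s, t ∈ {1, −1}} ∪ {γ₁, γ₂, (γ₁ + γ₂ + γ₃)/2, (γ₁ + γ₂ − γ₃)/2}. Then a subset P ⊆ Δ is a cominuscule parabolic set of roots of Δ if and only if g(P) = P₀ for some g ∈ S(Δ), where S(Δ) is the group of linear maps of ℝ³ of the form γ_i ↦ ±γ_{σ(i)} for σ ∈ S₃ and arbitrary signs; in particular P₀ is itself a cominuscule parabolic set of roots. -/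

import Mathlib

open Pointwise

/-- A proper subset `P` of a symmetric root set `Δ` is a parabolic set of roots if
`Δ = P ∪ (-P)` and `P` is closed under sums lying in `Δ`. -/
def IsParabolic {V : Type*} [AddCommGroup V] (Δ P : Set V) : Prop :=
  P ⊂ Δ ∧ Δ = P ∪ (-P) ∧ ∀ α ∈ P, ∀ β ∈ P, α + β ∈ Δ → α + β ∈ P

/-- A parabolic set of roots is cominuscule if the sum of any two elements of its
nilradical `N⁺ = P \ (-P)` is not a root. -/
def IsCominuscule {V : Type*} [AddCommGroup V] (Δ P : Set V) : Prop :=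
  IsParabolic Δ P ∧ ∀ α ∈ P \ (-P), ∀ β ∈ P \ (-P), α + β ∉ Δ

namespace D21

/-- The standard basis `γ₁, γ₂, γ₃` of `ℝ³`. -/
noncomputable def γ (i : Fin 3) : Fin 3 → ℝ := Pi.single i 1

/-- The root system of `D(2,1;α)`. -/
noncomputable def Δroot : Set (Fin 3 → ℝ) :=
  {v | ∃ i : Fin 3, v = γ i ∨ v = -γ i} ∪
  {v | ∃ s : Fin 3 → ℝ, (∀ i, s i = 1 ∨ s i = -1) ∧
      v = (2⁻¹ : ℝ) • (s 0 • γ 0 + s 1 • γ 1 + s 2 • γ 2)}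

/-- The cominuscule parabolic set `P₀`. -/
noncomputable def P₀ : Set (Fin 3 → ℝ) :=
  {v | v = γ 2 ∨ v = -γ 2} ∪
  {v | ∃ s t : ℝ, (s = 1 ∨ s = -1) ∧ (t = 1 ∨ t = -1) ∧
      v = (2⁻¹ : ℝ) • (s • (γ 0 - γ 1) + t • γ 2)} ∪
  {v | v = γ 0 ∨ v = γ 1 ∨ v = (2⁻¹ : ℝ) • (γ 0 + γ 1 + γ 2) ∨
      v = (2⁻¹ : ℝ) • (γ 0 + γ 1 - γ 2)}

/-- An element of `S(Δ)`: `γ_i ↦ ±γ_{σ(i)}` for `σ ∈ S₃` and arbitrary signs. -/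
def act (σ : Equiv.Perm (Fin 3)) (s : Fin 3 → ℝ) : (Fin 3 → ℝ) → (Fin 3 → ℝ) :=
  fun v i => s i * v (σ.symm i)

end D21

/-!
The functional `v ↦ v 0 + v 1` takes only the values `-1, 0, 1` on `Δ`, and `P₀` is its
nonnegative part. The nonnegative part of any such grading is a cominuscule parabolic set: two
roots of positive degree would add up to a root of degree `2`.

Conversely, let `P` be cominuscule. If all `±γ i` lay in `P`, adding them to an odd root would
flip its coordinates one at a time, so `P = Δ`; hence some `±γ i` lies in the nilradical, and a
signed permutation moves it to `γ 0`. A root `β` with `γ 0 - β ∈ Δ` cannot have `-β` in the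
nilradical, which puts the four odd roots with first coordinate `1/2` into `P`. Two of these add
up to `γ 0` when they differ in both other coordinates, so they are not both in the nilradical
and the negative of one of them lies in `P`; up to the signed permutations fixing `γ 0` this
gives `(-1, 1, 1)/2, (-1, 1, -1)/2 ∈ P`, and closedness under addition then pins `P` down to `P₀`.
-/

section General

variable {V : Type*} [AddCommGroup V] {Δ P : Set V} {α β : V}

theorem IsParabolic.mem_or_neg_mem (hP : IsParabolic Δ P) (hα : α ∈ Δ) : α ∈ P ∨ -α ∈ P := by
  rw [hP.2.1] at hα
  exact hα

theorem IsParabolic.add_mem (hP : IsParabolic Δ P) (hα : α ∈ P) (hβ : β ∈ P)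
    (h : α + β ∈ Δ) : α + β ∈ P :=
  hP.2.2 α hα β hβ h

theorem IsCominuscule.mem_of_sub_mem (hP : IsCominuscule Δ P) (hα : α ∈ P \ -P) (hβ : β ∈ Δ)
    (h : α - β ∈ Δ) : β ∈ P := by
  by_contra hβP
  have hβ' : -β ∈ P := (hP.1.mem_or_neg_mem hβ).resolve_left hβP
  exact hP.2 α hα (-β) ⟨hβ', by simpa [Set.mem_neg] using hβP⟩ (sub_eq_add_neg α β ▸ h)

theorem IsCominuscule.neg_mem_or_neg_mem (hP : IsCominuscule Δ P) (hα : α ∈ P) (hβ : β ∈ P)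
    (h : α + β ∈ Δ) : -α ∈ P ∨ -β ∈ P := by
  by_contra! H
  exact hP.2 α ⟨hα, H.1⟩ β ⟨hβ, H.2⟩ h

theorem image_diff_neg {W F : Type*} [AddCommGroup W] [FunLike F V W] [AddMonoidHomClass F V W]
    {f : F} (hf : Function.Injective f) (P : Set V) : f '' (P \ -P) = f '' P \ -(f '' P) := by
  rw [Set.image_sdiff hf, Set.image_neg]

theorem IsCominuscule.image {W F : Type*} [AddCommGroup W] [FunLike F V W]
    [AddMonoidHomClass F V W] (hP : IsCominuscule Δ P) {f : F} (hf : Function.Injective f) :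
    IsCominuscule (f '' Δ) (f '' P) := by
  obtain ⟨⟨hsub, hcover, hadd⟩, hnil⟩ := hP
  refine ⟨⟨hf.image_strictMono hsub, by rw [hcover, Set.image_union, Set.image_neg], ?_⟩, ?_⟩
  · rintro _ ⟨α, hα, rfl⟩ _ ⟨β, hβ, rfl⟩ h
    rw [← map_add, hf.mem_set_image] at h ⊢
    exact hadd α hα β hβ h
  · rw [← image_diff_neg hf]
    rintro _ ⟨α, hα, rfl⟩ _ ⟨β, hβ, rfl⟩ h
    rw [← map_add, hf.mem_set_image] at h
    exact hnil α hα β hβ h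

theorem isCominuscule_setOf_nonneg {R : Type*} [Ring R] [LinearOrder R] [IsStrictOrderedRing R]
    (hΔ : ∀ v ∈ Δ, -v ∈ Δ) (h : V →+ R) (hval : ∀ v ∈ Δ, h v = -1 ∨ h v = 0 ∨ h v = 1)
    (hne : ∃ v ∈ Δ, h v ≠ 0) : IsCominuscule Δ {v ∈ Δ | 0 ≤ h v} := by
  have hnil : ∀ v ∈ {v ∈ Δ | 0 ≤ h v} \ -{v ∈ Δ | 0 ≤ h v}, h v = 1 := by
    rintro v ⟨⟨hv, -⟩, hv'⟩
    have hpos : 0 < h v := lt_of_not_ge fun hle => hv' ⟨hΔ v hv, by simpa using hle⟩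
    rcases hval v hv with h1 | h1 | h1 <;> first | exact h1 | (rw [h1] at hpos; norm_num at hpos)
  obtain ⟨v, hv, hneg⟩ : ∃ v ∈ Δ, h v < 0 := by
    obtain ⟨v, hv, hv0⟩ := hne
    rcases hv0.lt_or_gt with hlt | hgt
    exacts [⟨v, hv, hlt⟩, ⟨-v, hΔ v hv, by simpa using hgt⟩]
  refine ⟨⟨(Set.ssubset_iff_of_subset (Set.sep_subset _ _)).2 ⟨v, hv, fun h' => ?_⟩, ?_, ?_⟩, ?_⟩
  · exact absurd h'.2 (not_le.2 hneg)
  · ext w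
    refine ⟨fun hw => ?_, ?_⟩
    · by_cases hw0 : 0 ≤ h w
      · exact Or.inl ⟨hw, hw0⟩
      · exact Or.inr ⟨hΔ w hw, by rw [map_neg]; exact neg_nonneg.2 (not_le.1 hw0).le⟩
    · rintro (⟨hw, -⟩ | ⟨hw, -⟩)
      exacts [hw, neg_neg w ▸ hΔ _ hw]
  · rintro α ⟨-, hα⟩ β ⟨-, hβ⟩ hαβ
    exact ⟨hαβ, by rw [map_add]; positivity⟩
  · intro α hα β hβ hαβ
    rcases hval _ hαβ with h2 | h2 | h2 <;> rw [map_add, hnil α hα, hnil β hβ] at h2 <;>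
      norm_num at h2

end General

namespace D21

def IsSign (a : ℝ) : Prop := a = 1 ∨ a = -1

theorem IsSign.neg {a : ℝ} (ha : IsSign a) : IsSign (-a) := by
  rcases ha with rfl | rfl <;> norm_num [IsSign]

theorem IsSign.mul {a b : ℝ} (ha : IsSign a) (hb : IsSign b) : IsSign (a * b) := by
  rcases ha with rfl | rfl <;> rcases hb with rfl | rfl <;> norm_num [IsSign]

theorem IsSign.mul_self {a : ℝ} (ha : IsSign a) : a * a = 1 := by
  rcases ha with rfl | rfl <;> norm_num

noncomputable def oddRoot (a b c : ℝ) : Fin 3 → ℝ := (2⁻¹ : ℝ) • (a • γ 0 + b • γ 1 + c • γ 2)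

theorem γ_mem_Δroot (i : Fin 3) : γ i ∈ Δroot := Or.inl ⟨i, Or.inl rfl⟩

theorem neg_γ_mem_Δroot (i : Fin 3) : -γ i ∈ Δroot := Or.inl ⟨i, Or.inr rfl⟩

theorem smul_γ_mem_Δroot {ε : ℝ} (hε : IsSign ε) (i : Fin 3) : ε • γ i ∈ Δroot := by
  rcases hε with rfl | rfl
  exacts [Or.inl ⟨i, Or.inl (one_smul _ _)⟩, Or.inl ⟨i, Or.inr (neg_one_smul _ _)⟩]

theorem oddRoot_mem_Δroot {a b c : ℝ} (ha : IsSign a) (hb : IsSign b) (hc : IsSign c) :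
    oddRoot a b c ∈ Δroot :=
  Or.inr ⟨![a, b, c], fun i => by fin_cases i <;> assumption, rfl⟩

theorem neg_oddRoot (a b c : ℝ) : -oddRoot a b c = oddRoot (-a) (-b) (-c) := by
  simp only [oddRoot]; module

theorem inv_two_smul_sum_γ (t : Fin 3 → ℝ) :
    (2⁻¹ : ℝ) • (t 0 • γ 0 + t 1 • γ 1 + t 2 • γ 2) = fun j => 2⁻¹ * t j := by
  funext j; fin_cases j <;> simp [γ]

theorem Δroot_cases {v : Fin 3 → ℝ} (hv : v ∈ Δroot) :
    v = γ 0 ∨ v = γ 1 ∨ v = γ 2 ∨ v = -γ 0 ∨ v = -γ 1 ∨ v = -γ 2 ∨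
    v = oddRoot 1 1 1 ∨ v = oddRoot 1 1 (-1) ∨ v = oddRoot 1 (-1) 1 ∨ v = oddRoot 1 (-1) (-1) ∨
    v = oddRoot (-1) 1 1 ∨ v = oddRoot (-1) 1 (-1) ∨ v = oddRoot (-1) (-1) 1 ∨
    v = oddRoot (-1) (-1) (-1) := by
  rcases hv with ⟨i, rfl | rfl⟩ | ⟨s, hs, rfl⟩
  · fin_cases i <;> simp
  · fin_cases i <;> simp
  · rw [show (2⁻¹ : ℝ) • (s 0 • γ 0 + s 1 • γ 1 + s 2 • γ 2) = oddRoot (s 0) (s 1) (s 2) from rfl]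
    rcases hs 0 with h0 | h0 <;> rcases hs 1 with h1 | h1 <;> rcases hs 2 with h2 | h2 <;>
      rw [h0, h1, h2] <;> simp only [true_or, or_true]

def grading : (Fin 3 → ℝ) →+ ℝ :=
  Pi.evalAddMonoidHom (fun _ => ℝ) 0 + Pi.evalAddMonoidHom (fun _ => ℝ) 1

theorem grading_apply (v : Fin 3 → ℝ) : grading v = v 0 + v 1 := rfl

@[simp] theorem grading_γ_zero : grading (γ 0) = 1 := by simp [grading_apply, γ]

@[simp] theorem grading_γ_one : grading (γ 1) = 1 := by simp [grading_apply, γ]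

@[simp] theorem grading_γ_two : grading (γ 2) = 0 := by simp [grading_apply, γ]

@[simp] theorem grading_oddRoot (a b c : ℝ) : grading (oddRoot a b c) = (a + b) / 2 := by
  simp [grading_apply, oddRoot, γ]; ring

theorem grading_mem_Δroot {v : Fin 3 → ℝ} (hv : v ∈ Δroot) :
    grading v = -1 ∨ grading v = 0 ∨ grading v = 1 := by
  rcases Δroot_cases hv with rfl | rfl | rfl | rfl | rfl | rfl | rfl | rfl | rfl | rfl | rfl |
    rfl | rfl | rfl <;> norm_num

theorem P₀_eq : P₀ = {v ∈ Δroot | 0 ≤ grading v} := by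
  ext v
  constructor
  · rintro (((rfl | rfl) | ⟨s, t, hs, ht, rfl⟩) | (rfl | rfl | rfl | rfl))
    · exact ⟨γ_mem_Δroot 2, by simp⟩
    · exact ⟨neg_γ_mem_Δroot 2, by simp⟩
    · rw [show (2⁻¹ : ℝ) • (s • (γ 0 - γ 1) + t • γ 2) = oddRoot s (-s) t by
        simp only [oddRoot]; module]
      exact ⟨oddRoot_mem_Δroot hs (IsSign.neg hs) ht, by simp⟩
    · exact ⟨γ_mem_Δroot 0, by simp⟩
    · exact ⟨γ_mem_Δroot 1, by simp⟩
    · rw [show (2⁻¹ : ℝ) • (γ 0 + γ 1 + γ 2) = oddRoot 1 1 1 by simp only [oddRoot]; module]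
      exact ⟨oddRoot_mem_Δroot (.inl rfl) (.inl rfl) (.inl rfl), by norm_num⟩
    · rw [show (2⁻¹ : ℝ) • (γ 0 + γ 1 - γ 2) = oddRoot 1 1 (-1) by simp only [oddRoot]; module]
      exact ⟨oddRoot_mem_Δroot (.inl rfl) (.inl rfl) (.inr rfl), by norm_num⟩
  · intro ⟨hv, hv0⟩
    have hodd (s t : ℝ) (hs : IsSign s) (ht : IsSign t) : oddRoot s (-s) t ∈ P₀ :=
      Or.inl (Or.inr ⟨s, t, hs, ht, by simp only [oddRoot]; module⟩)
    rcases Δroot_cases hv with rfl | rfl | rfl | rfl | rfl | rfl | rfl | rfl | rfl | rfl | rfl |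
      rfl | rfl | rfl
    · exact Or.inr (Or.inl rfl)
    · exact Or.inr (Or.inr (Or.inl rfl))
    · exact Or.inl (Or.inl (Or.inl rfl))
    · norm_num at hv0
    · norm_num at hv0
    · exact Or.inl (Or.inl (Or.inr rfl))
    · exact Or.inr (Or.inr (Or.inr (Or.inl (by simp only [oddRoot]; module))))
    · exact Or.inr (Or.inr (Or.inr (Or.inr (by simp only [oddRoot]; module))))
    · exact hodd 1 1 (.inl rfl) (.inl rfl)
    · simpa using hodd 1 (-1) (.inl rfl) (.inr rfl)
    · simpa using hodd (-1) 1 (.inr rfl) (.inl rfl)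
    · simpa using hodd (-1) (-1) (.inr rfl) (.inr rfl)
    · norm_num at hv0
    · norm_num at hv0

theorem isCominuscule_P₀ : IsCominuscule Δroot P₀ := by
  rw [P₀_eq]
  refine isCominuscule_setOf_nonneg (fun v hv => ?_) grading (fun v => grading_mem_Δroot)
    ⟨γ 0, γ_mem_Δroot 0, by simp⟩
  rcases hv with ⟨i, rfl | rfl⟩ | ⟨s, hs, rfl⟩
  · exact neg_γ_mem_Δroot i
  · simpa using γ_mem_Δroot i
  · exact Or.inr ⟨-s, fun i => IsSign.neg (hs i), by simp only [Pi.neg_apply]; module⟩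

theorem act_act (σ τ : Equiv.Perm (Fin 3)) (s t v : Fin 3 → ℝ) :
    act σ s (act τ t v) = act (σ * τ) (fun i => s i * t (σ.symm i)) v := by
  funext i; simp [act, Equiv.Perm.mul_def, mul_assoc]

noncomputable def signedPerm (σ : Equiv.Perm (Fin 3)) (s : Fin 3 → ℝ)
    (hs : ∀ i, IsSign (s i)) : (Fin 3 → ℝ) ≃ₗ[ℝ] (Fin 3 → ℝ) where
  toFun := act σ s
  invFun := act σ.symm (s ∘ σ)
  map_add' v w := by funext i; simp [act, mul_add]
  map_smul' c v := by funext i; simp [act]; ring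
  left_inv v := by funext i; simp [act, ← mul_assoc, (hs (σ i)).mul_self]
  right_inv v := by funext i; simp [act, ← mul_assoc, (hs i).mul_self]

theorem signedPerm_apply {σ : Equiv.Perm (Fin 3)} {s : Fin 3 → ℝ} (hs : ∀ i, IsSign (s i))
    (v : Fin 3 → ℝ) : signedPerm σ s hs v = act σ s v := rfl

@[simp] theorem signedPerm_γ {σ : Equiv.Perm (Fin 3)} {s : Fin 3 → ℝ} (hs : ∀ i, IsSign (s i))
    (i : Fin 3) : signedPerm σ s hs (γ i) = s (σ i) • γ (σ i) := by
  funext k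
  by_cases hk : k = σ i
  · subst hk; simp [signedPerm_apply, act, γ]
  · simp [signedPerm_apply, act, γ, hk, Equiv.symm_apply_eq]

theorem act_mem_Δroot {σ : Equiv.Perm (Fin 3)} {s : Fin 3 → ℝ} (hs : ∀ i, IsSign (s i))
    {v : Fin 3 → ℝ} (hv : v ∈ Δroot) : act σ s v ∈ Δroot := by
  rw [← signedPerm_apply hs]
  rcases hv with ⟨i, rfl | rfl⟩ | ⟨t, ht, rfl⟩
  · simpa using smul_γ_mem_Δroot (hs (σ i)) (σ i)
  · simpa using smul_γ_mem_Δroot (hs (σ i)).neg (σ i)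
  · refine Or.inr ⟨fun i => s i * t (σ.symm i), fun i => (hs i).mul (ht _), ?_⟩
    rw [inv_two_smul_sum_γ t, inv_two_smul_sum_γ (fun i => s i * t (σ.symm i)),
      signedPerm_apply]
    funext i; simp [act]; ring

theorem image_signedPerm_Δroot {σ : Equiv.Perm (Fin 3)} {s : Fin 3 → ℝ}
    (hs : ∀ i, IsSign (s i)) : signedPerm σ s hs '' Δroot = Δroot := by
  refine subset_antisymm (Set.image_subset_iff.2 fun v hv => act_mem_Δroot hs hv) fun v hv => ?_
  exact ⟨(signedPerm σ s hs).symm v, act_mem_Δroot (fun i => hs (σ i)) hv, by simp⟩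

theorem isCominuscule_image_signedPerm {P : Set (Fin 3 → ℝ)} (hP : IsCominuscule Δroot P)
    {σ : Equiv.Perm (Fin 3)} {s : Fin 3 → ℝ} (hs : ∀ i, IsSign (s i)) :
    IsCominuscule Δroot (signedPerm σ s hs '' P) :=
  image_signedPerm_Δroot hs ▸ hP.image (signedPerm σ s hs).injective

theorem mem_image_signedPerm_nilradical {P : Set (Fin 3 → ℝ)} {σ : Equiv.Perm (Fin 3)}
    {s : Fin 3 → ℝ} (hs : ∀ i, IsSign (s i)) {v w : Fin 3 → ℝ} (hv : v ∈ P \ -P)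
    (h : signedPerm σ s hs v = w) :
    w ∈ signedPerm σ s hs '' P \ -(signedPerm σ s hs '' P) := by
  rw [← image_diff_neg (signedPerm σ s hs).injective]
  exact ⟨v, hv, h⟩

def IsConjP₀ (P : Set (Fin 3 → ℝ)) : Prop :=
  ∃ (σ : Equiv.Perm (Fin 3)) (s : Fin 3 → ℝ), (∀ i, IsSign (s i)) ∧ act σ s '' P = P₀

theorem IsConjP₀.of_image {P : Set (Fin 3 → ℝ)} (σ : Equiv.Perm (Fin 3)) {s : Fin 3 → ℝ}
    (hs : ∀ i, IsSign (s i)) (h : IsConjP₀ (signedPerm σ s hs '' P)) : IsConjP₀ P := by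
  obtain ⟨τ, t, ht, he⟩ := h
  refine ⟨τ * σ, fun i => t i * s (τ.symm i), fun i => (ht i).mul (hs _), ?_⟩
  rw [← he, Set.image_image]
  simp only [signedPerm_apply, act_act]

theorem isConjP₀_of_eq {P : Set (Fin 3 → ℝ)} (h : P = P₀) : IsConjP₀ P := by
  refine ⟨1, 1, fun _ => .inl rfl, ?_⟩
  rw [h, show act 1 1 = id by funext v i; exact one_mul _, Set.image_id]

theorem IsConjP₀.isCominuscule {P : Set (Fin 3 → ℝ)} (h : IsConjP₀ P) :
    IsCominuscule Δroot P := by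
  obtain ⟨σ, s, hs, he⟩ := h
  have hinv (v : Fin 3 → ℝ) :
      signedPerm σ.symm (fun i => s (σ i)) (fun i => hs (σ i)) (act σ s v) = v :=
    (signedPerm σ s hs).symm_apply_apply v
  have := isCominuscule_image_signedPerm isCominuscule_P₀ (σ := σ.symm) (fun i => hs (σ i))
  rwa [← he, Set.image_image, funext hinv, Set.image_id'] at this

theorem exists_smul_γ_mem_nilradical {P : Set (Fin 3 → ℝ)} (hP : IsParabolic Δroot P) :
    ∃ i ε, IsSign ε ∧ ε • γ i ∈ P \ -P := by
  by_contra! H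
  have hγ (i : Fin 3) (ε : ℝ) (hε : IsSign ε) : ε • γ i ∈ P := by
    rcases hP.mem_or_neg_mem (smul_γ_mem_Δroot hε i) with h | h
    · exact h
    · by_contra h'
      exact H i (-ε) hε.neg ⟨by simpa using h, by simpa [Set.mem_neg] using h'⟩
  have hflip (x y : Fin 3 → ℝ) (i : Fin 3) (ε : ℝ) (hε : IsSign ε) (hx : x ∈ P)
      (hy : y ∈ Δroot) (hxy : x + ε • γ i = y) : y ∈ P :=
    hxy ▸ hP.add_mem hx (hγ i ε hε) (hxy ▸ hy)
  have hneg (a b c : ℝ) (ha : IsSign a) (hb : IsSign b) (hc : IsSign c)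
      (h : oddRoot a b c ∈ P) : oddRoot (-a) (-b) (-c) ∈ P := by
    have h1 := hflip _ (oddRoot (-a) b c) 0 (-a) ha.neg h (oddRoot_mem_Δroot ha.neg hb hc)
      (by simp only [oddRoot]; module)
    have h2 := hflip _ (oddRoot (-a) (-b) c) 1 (-b) hb.neg h1
      (oddRoot_mem_Δroot ha.neg hb.neg hc) (by simp only [oddRoot]; module)
    exact hflip _ _ 2 (-c) hc.neg h2 (oddRoot_mem_Δroot ha.neg hb.neg hc.neg)
      (by simp only [oddRoot]; module)
  refine hP.1.2 fun v hv => ?_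
  rcases hv with ⟨i, rfl | rfl⟩ | ⟨s, hs, rfl⟩
  · simpa using hγ i 1 (.inl rfl)
  · simpa using hγ i (-1) (.inr rfl)
  · change oddRoot (s 0) (s 1) (s 2) ∈ P
    rcases hP.mem_or_neg_mem (oddRoot_mem_Δroot (hs 0) (hs 1) (hs 2)) with h | h
    · exact h
    · rw [neg_oddRoot] at h
      simpa only [neg_neg] using
        hneg _ _ _ (IsSign.neg (hs 0)) (IsSign.neg (hs 1)) (IsSign.neg (hs 2)) h

theorem oddRoot_one_mem {P : Set (Fin 3 → ℝ)} (hP : IsCominuscule Δroot P)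
    (h0 : γ 0 ∈ P \ -P) {b c : ℝ} (hb : IsSign b) (hc : IsSign c) : oddRoot 1 b c ∈ P := by
  refine hP.mem_of_sub_mem h0 (oddRoot_mem_Δroot (.inl rfl) hb hc) ?_
  rw [show γ 0 - oddRoot 1 b c = oddRoot 1 (-b) (-c) by simp only [oddRoot]; module]
  exact oddRoot_mem_Δroot (.inl rfl) hb.neg hc.neg

theorem eq_P₀_of_mem {P : Set (Fin 3 → ℝ)} (hP : IsCominuscule Δroot P) (h0 : γ 0 ∈ P \ -P)
    (ha : oddRoot (-1) 1 1 ∈ P) (hb : oddRoot (-1) 1 (-1) ∈ P) : P = P₀ := by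
  have hodd {b c : ℝ} (hb' : IsSign b) (hc' : IsSign c) := oddRoot_one_mem hP h0 hb' hc'
  have hsum (x y z : Fin 3 → ℝ) (hx : x ∈ P) (hy : y ∈ P) (hz : z ∈ Δroot) (h : x + y = z) :
      z ∈ P :=
    h ▸ hP.1.add_mem hx hy (h ▸ hz)
  have hc : oddRoot (-1) (-1) 1 ∉ P := fun h =>
    h0.2 (hsum _ _ _ h hb (neg_γ_mem_Δroot 0) (by simp only [oddRoot]; module))
  have hd : oddRoot (-1) (-1) (-1) ∉ P := fun h =>
    h0.2 (hsum _ _ _ h ha (neg_γ_mem_Δroot 0) (by simp only [oddRoot]; module))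
  have h1 : γ 1 ∈ P :=
    hsum _ _ _ ha (hodd (.inl rfl) (.inr rfl)) (γ_mem_Δroot 1) (by simp only [oddRoot]; module)
  have h1' : -γ 1 ∉ P := fun h =>
    hc (hsum _ _ _ h ha (oddRoot_mem_Δroot (.inr rfl) (.inr rfl) (.inl rfl))
      (by simp only [oddRoot]; module))
  have h2 : γ 2 ∈ P :=
    hsum _ _ _ ha (hodd (.inr rfl) (.inl rfl)) (γ_mem_Δroot 2) (by simp only [oddRoot]; module)
  have h2' : -γ 2 ∈ P :=
    hsum _ _ _ hb (hodd (.inr rfl) (.inr rfl)) (neg_γ_mem_Δroot 2)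
      (by simp only [oddRoot]; module)
  have h0' : -γ 0 ∉ P := h0.2
  rw [P₀_eq]
  ext v
  refine ⟨fun hv => ⟨hP.1.1.subset hv, ?_⟩, fun ⟨hv, hv0⟩ => ?_⟩
  · rcases Δroot_cases (hP.1.1.subset hv) with rfl | rfl | rfl | rfl | rfl | rfl | rfl | rfl |
      rfl | rfl | rfl | rfl | rfl | rfl <;> first | contradiction | norm_num
  · rcases Δroot_cases hv with rfl | rfl | rfl | rfl | rfl | rfl | rfl | rfl | rfl | rfl | rfl |
      rfl | rfl | rfl <;>
      first | exact h0.1 | assumption | exact hodd (by norm_num [IsSign]) (by norm_num [IsSign]) |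
        norm_num at hv0

theorem isConjP₀_of_oddRoot_mem {P : Set (Fin 3 → ℝ)} (hP : IsCominuscule Δroot P)
    (h0 : γ 0 ∈ P \ -P) (ha : oddRoot (-1) 1 1 ∈ P) : IsConjP₀ P := by
  have hsum : oddRoot 1 (-1) 1 + oddRoot 1 1 (-1) ∈ Δroot := by
    rw [show oddRoot 1 (-1) 1 + oddRoot 1 1 (-1) = γ 0 by simp only [oddRoot]; module]
    exact γ_mem_Δroot 0
  rcases hP.neg_mem_or_neg_mem (oddRoot_one_mem hP h0 (.inr rfl) (.inl rfl))
    (oddRoot_one_mem hP h0 (.inl rfl) (.inr rfl)) hsum with h | h <;>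
    rw [neg_oddRoot] at h <;> norm_num at h
  · exact isConjP₀_of_eq (eq_P₀_of_mem hP h0 ha h)
  · have hs : ∀ i, IsSign ((1 : Fin 3 → ℝ) i) := fun _ => .inl rfl
    have hσ : Equiv.swap (1 : Fin 3) 2 0 = 0 := by decide
    refine IsConjP₀.of_image (Equiv.swap 1 2) hs (isConjP₀_of_eq
      (eq_P₀_of_mem (isCominuscule_image_signedPerm hP hs)
        (mem_image_signedPerm_nilradical hs h0 (by simp [hσ])) ⟨_, ha, ?_⟩ ⟨_, h, ?_⟩)) <;>
      simp [hσ, oddRoot] <;> module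

theorem isConjP₀_of_γ_mem {P : Set (Fin 3 → ℝ)} (hP : IsCominuscule Δroot P)
    (h0 : γ 0 ∈ P \ -P) : IsConjP₀ P := by
  have hsum : oddRoot 1 (-1) (-1) + oddRoot 1 1 1 ∈ Δroot := by
    rw [show oddRoot 1 (-1) (-1) + oddRoot 1 1 1 = γ 0 by simp only [oddRoot]; module]
    exact γ_mem_Δroot 0
  rcases hP.neg_mem_or_neg_mem (oddRoot_one_mem hP h0 (.inr rfl) (.inr rfl))
    (oddRoot_one_mem hP h0 (.inl rfl) (.inl rfl)) hsum with h | h <;>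
    rw [neg_oddRoot] at h <;> norm_num at h
  · exact isConjP₀_of_oddRoot_mem hP h0 h
  · have hs : ∀ i, IsSign (![1, -1, -1] i) := fun i => by fin_cases i <;> norm_num [IsSign]
    exact IsConjP₀.of_image 1 hs (isConjP₀_of_oddRoot_mem
      (isCominuscule_image_signedPerm hP hs) (mem_image_signedPerm_nilradical hs h0 (by simp))
      ⟨_, h, by simp [oddRoot]⟩)

theorem isConjP₀ {P : Set (Fin 3 → ℝ)} (hP : IsCominuscule Δroot P) : IsConjP₀ P := by
  obtain ⟨i, ε, hε, hmem⟩ := exists_smul_γ_mem_nilradical hP.1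
  have hs : ∀ _ : Fin 3, IsSign ε := fun _ => hε
  exact IsConjP₀.of_image (Equiv.swap 0 i) hs (isConjP₀_of_γ_mem
    (isCominuscule_image_signedPerm hP hs)
    (mem_image_signedPerm_nilradical hs hmem (by simp [smul_smul, hε.mul_self])))

end D21

theorem stmt_9 (P : Set (Fin 3 → ℝ)) :
    (IsCominuscule D21.Δroot P ↔
      ∃ (σ : Equiv.Perm (Fin 3)) (s : Fin 3 → ℝ), (∀ i, s i = 1 ∨ s i = -1) ∧
        D21.act σ s '' P = D21.P₀) ∧
    IsCominuscule D21.Δroot D21.P₀ :=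
  ⟨⟨D21.isConjP₀, D21.IsConjP₀.isCominuscule⟩, D21.isCominuscule_P₀⟩
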